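/- There exists a simple graph on 23 vertices that is 10-regular and triangle-distinct. -/

import Mathlib

set_option maxHeartbeats 1000000

/-- The triangle-degree of a vertex `v` of a simple graph `G`: the number of triangles
(3-cliques) of `G` that contain `v`. -/
noncomputable def triangleDegree {V : Type*} (G : SimpleGraph V) (v : V) : ℕ :=
  {s | s ∈ G.cliqueSet 3 ∧ v ∈ s}.ncard

/-- A simple graph is triangle-distinct if all its vertices have pairwise distinct
triangle-degrees. -/
def TriangleDistinct {V : Type*} (G : SimpleGraph V) : Prop :=
  Function.Injective (triangleDegree G)

theorem triangleDegree_eq_card {V : Type*} [Fintype V] [LinearOrder V]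
    (G : SimpleGraph V) [DecidableRel G.Adj] (v : V) :
    {s | s ∈ G.cliqueSet 3 ∧ v ∈ s}.ncard =
      (Finset.univ.filter (fun p : V × V =>
        p.1 < p.2 ∧ G.Adj v p.1 ∧ G.Adj v p.2 ∧ G.Adj p.1 p.2)).card := by
  classical
  have hset : {s | s ∈ G.cliqueSet 3 ∧ v ∈ s} =
      ↑((G.cliqueFinset 3).filter (fun s => v ∈ s)) := by
    ext s
    simp [SimpleGraph.mem_cliqueFinset_iff, SimpleGraph.mem_cliqueSet_iff]
  rw [hset, Set.ncard_coe_finset]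
  refine (Finset.card_bij (fun p _ => ({v, p.1, p.2} : Finset V)) ?_ ?_ ?_).symm
  · rintro ⟨a, b⟩ hp
    simp only [Finset.mem_filter, Finset.mem_univ, true_and] at hp
    obtain ⟨hab, hva, hvb, habj⟩ := hp
    simp only [Finset.mem_filter, SimpleGraph.mem_cliqueFinset_iff]
    refine ⟨SimpleGraph.is3Clique_triple_iff.mpr ⟨hva, hvb, habj⟩, by simp⟩
  · rintro ⟨a, b⟩ hp ⟨c, d⟩ hq h
    simp only [Finset.mem_filter, Finset.mem_univ, true_and] at hp hq
    obtain ⟨hab, hva, hvb, -⟩ := hp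
    obtain ⟨hcd, hvc, hvd, -⟩ := hq
    have hva' := G.ne_of_adj hva
    have hvb' := G.ne_of_adj hvb
    have hvc' := G.ne_of_adj hvc
    have hvd' := G.ne_of_adj hvd
    have h' : ({v, a, b} : Finset V) = {v, c, d} := h
    have ha : a ∈ ({v, c, d} : Finset V) := by rw [← h']; simp
    have hb : b ∈ ({v, c, d} : Finset V) := by rw [← h']; simp
    simp only [Finset.mem_insert, Finset.mem_singleton] at ha hb
    have ha' : a = c ∨ a = d := by
      rcases ha with h1 | h1 | h1 <;> [exact absurd h1.symm hva'; tauto; tauto]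
    have hb' : b = c ∨ b = d := by
      rcases hb with h1 | h1 | h1 <;> [exact absurd h1.symm hvb'; tauto; tauto]
    rcases ha' with h1 | h1 <;> rcases hb' with h2 | h2
    · rw [h1, h2] at hab; exact absurd hab (lt_irrefl _)
    · simp [Prod.ext_iff, h1, h2]
    · rw [h1, h2] at hab; exact absurd (hab.trans hcd) (lt_irrefl _)
    · rw [h1, h2] at hab; exact absurd hab (lt_irrefl _)
  · intro s hs
    simp only [Finset.mem_filter, SimpleGraph.mem_cliqueFinset_iff] at hs
    obtain ⟨hclq, hvs⟩ := hs
    obtain ⟨a, b, c, hab, hac, hbc, rfl⟩ := SimpleGraph.is3Clique_iff.mp hclq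
    simp only [Finset.mem_insert, Finset.mem_singleton] at hvs
    have key : ∀ x y : V, G.Adj v x → G.Adj v y → G.Adj x y →
        ∃ p, (∃ hp : p ∈ Finset.univ.filter (fun p : V × V =>
          p.1 < p.2 ∧ G.Adj v p.1 ∧ G.Adj v p.2 ∧ G.Adj p.1 p.2), True) ∧
          ({v, p.1, p.2} : Finset V) = {v, x, y} := by
      intro x y hx hy hxy
      rcases lt_or_gt_of_ne (G.ne_of_adj hxy) with h | h
      · exact ⟨(x, y), ⟨Finset.mem_filter.mpr ⟨Finset.mem_univ _, h, hx, hy, hxy⟩, trivial⟩, rfl⟩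
      · exact ⟨(y, x), ⟨Finset.mem_filter.mpr ⟨Finset.mem_univ _, h, hy, hx, hxy.symm⟩, trivial⟩,
          by rw [Finset.pair_comm y x]⟩
    rcases hvs with rfl | rfl | rfl
    · obtain ⟨p, ⟨hp, -⟩, hpe⟩ := key b c hab hac hbc
      exact ⟨p, hp, hpe⟩
    · obtain ⟨p, ⟨hp, -⟩, hpe⟩ := key a c hab.symm hbc hac
      refine ⟨p, hp, hpe.trans ?_⟩
      rw [Finset.insert_comm]
    · obtain ⟨p, ⟨hp, -⟩, hpe⟩ := key a b hac.symm hbc.symm hab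
      refine ⟨p, hp, hpe.trans ?_⟩
      rw [Finset.insert_comm]
      congr 1
      rw [Finset.pair_comm]

/-- Adjacency bitmask rows of an explicit 10-regular triangle-distinct graph on 23 vertices. -/
def triRows : List ℕ :=
  [5681600, 7660808, 2911288, 2202262, 7103756, 5662084, 5477249, 236137, 2120307, 5645768,
   2673206, 5645708, 5472713, 608823, 2893110, 1250507, 5943496, 629473, 2640439, 3630100,
   629347, 4998430, 2169459]

def triAdjB (i j : Fin 23) : Bool := (triRows.getD i.val 0).testBit j.val

def triG : SimpleGraph (Fin 23) where
  Adj i j := triAdjB i j = true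
  symm := by have : ∀ i j : Fin 23, triAdjB i j = true → triAdjB j i = true := by decide
             exact ⟨fun i j h => this i j h⟩
  loopless := by have : ∀ i : Fin 23, ¬ triAdjB i i = true := by decide
                 exact ⟨fun i h => this i h⟩

instance : DecidableRel triG.Adj :=
  fun i j => inferInstanceAs (Decidable (triAdjB i j = true))

def triCount (v : Fin 23) : ℕ :=
  (Finset.univ.filter (fun p : Fin 23 × Fin 23 =>
    p.1 < p.2 ∧ triG.Adj v p.1 ∧ triG.Adj v p.2 ∧ triG.Adj p.1 p.2)).card

def triVals : List ℕ :=
  [17, 13, 27, 14, 22, 9, 28, 23, 10, 7, 16, 6, 26, 11, 29, 24, 21, 19, 15, 20, 12, 25, 8]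

lemma triCount_val : ∀ v : Fin 23, triCount v = triVals.getD v.val 0 := by decide

lemma triG_regular : triG.IsRegularOfDegree 10 := by
  unfold SimpleGraph.IsRegularOfDegree
  decide

lemma triDeg_eq (v : Fin 23) : triangleDegree triG v = triCount v :=
  triangleDegree_eq_card triG v

lemma triVals_inj : ∀ a b : Fin 23, triVals.getD a.val 0 = triVals.getD b.val 0 → a = b := by
  decide

open scoped Classical in
/-- There exists a simple graph on 23 vertices that is 10-regular and triangle-distinct. -/
theorem exists_regular_triangle_distinct_23_10 :
    ∃ G : SimpleGraph (Fin 23), G.IsRegularOfDegree 10 ∧ TriangleDistinct G := by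
  refine ⟨triG, ?_, ?_⟩
  · intro v
    have h := triG_regular v
    convert h using 2
  · intro a b h
    apply triVals_inj
    rw [← triCount_val, ← triCount_val, ← triDeg_eq, ← triDeg_eq]
    exact h
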